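/- arXiv:2305.01774 — 8 statements merged into one kernel-verified Lean document; each statement's English description precedes it below -/
import Mathlib

section
/- For all non-negative integers i, j, the Delannoy number satisfies D(i,j) = \sum_{\ell=0}^{i} \binom{i+j-\ell}{i-\ell,\ j-\ell,\ \ell}, where the summand is the trinomial coefficient (i+j-\ell)!/((i-\ell)!(j-\ell)!\ell!). -/
/-- The Delannoy numbers on natural numbers. -/
def del : ℕ → ℕ → ℕ
  | 0, 0 => 1
  | 0, j+1 => del 0 j
  | i+1, 0 => del i 0
  | i+1, j+1 => del i (j+1) + del (i+1) j + del i j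
termination_by i j => i + j

/-- Auxiliary: trinomial coefficient written as a product of binomials. -/
def delV (i j ℓ : ℕ) : ℕ := Nat.choose (i + j - ℓ) i * Nat.choose i ℓ

lemma pascal2 (m i ℓ : ℕ) :
    (m+1).choose (i+1) * ((i+1).choose (ℓ+1)) =
      m.choose i * i.choose (ℓ+1) + m.choose (i+1) * ((i+1).choose (ℓ+1)) +
        m.choose i * i.choose ℓ := by
  rw [Nat.choose_succ_succ m i]
  rw [Nat.choose_succ_succ i ℓ]
  ring

lemma delV_rec (i j ℓ : ℕ) :
    delV (i+1) (j+1) (ℓ+1) = delV i (j+1) (ℓ+1) + delV (i+1) j (ℓ+1) + delV i j ℓ := by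
  unfold delV
  by_cases h : ℓ ≤ i + j
  · have h1 : i+1+(j+1)-(ℓ+1) = (i+j-ℓ)+1 := by omega
    have h2 : i+(j+1)-(ℓ+1) = i+j-ℓ := by omega
    have h3 : i+1+j-(ℓ+1) = i+j-ℓ := by omega
    rw [h1, h2, h3]
    exact pascal2 _ _ _
  · have h1 : i+1+(j+1)-(ℓ+1) = 0 := by omega
    have h2 : i+(j+1)-(ℓ+1) = 0 := by omega
    have h3 : i+1+j-(ℓ+1) = 0 := by omega
    have h4 : i+j-ℓ = 0 := by omega
    rw [h1, h2, h3, h4]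
    have hi1 : Nat.choose 0 (i+1) = 0 := Nat.choose_eq_zero_of_lt (by omega)
    have hi2 : Nat.choose i (ℓ+1) = 0 := Nat.choose_eq_zero_of_lt (by omega)
    have hi3 : Nat.choose i ℓ = 0 := Nat.choose_eq_zero_of_lt (by omega)
    rw [hi1, hi2, hi3]
    ring

lemma delV_zero (i j : ℕ) :
    delV (i+1) (j+1) 0 = delV i (j+1) 0 + delV (i+1) j 0 := by
  unfold delV
  have h1 : i+1+(j+1)-0 = (i+j+1)+1 := by omega
  have h2 : i+(j+1)-0 = i+j+1 := by omega
  have h3 : i+1+j-0 = i+j+1 := by omega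
  rw [h1, h2, h3, Nat.choose_succ_succ (i+j+1) i]
  simp [Nat.choose_zero_right]

lemma delV_row (i : ℕ) : ∑ ℓ ∈ Finset.range (i+1), delV i 0 ℓ = 1 := by
  rw [Finset.sum_eq_single_of_mem 0 (Finset.mem_range.2 (by omega))]
  · simp [delV]
  · intro ℓ hℓ hne
    have hℓ' : ℓ < i + 1 := Finset.mem_range.1 hℓ
    unfold delV
    have : i + 0 - ℓ < i := by omega
    rw [Nat.choose_eq_zero_of_lt this]
    ring

lemma del_eq_sum (i j : ℕ) : del i j = ∑ ℓ ∈ Finset.range (i+1), delV i j ℓ := by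
  induction i, j using del.induct with
  | case1 => simp [del, delV]
  | case2 j ih =>
      rw [show del 0 (j+1) = del 0 j from by simp [del], ih]
      simp [delV]
  | case3 i ih =>
      rw [show del (i+1) 0 = del i 0 from by simp [del], ih, delV_row, delV_row]
  | case4 i j ih1 ih2 ih3 =>
      rw [show del (i+1) (j+1) = del i (j+1) + del (i+1) j + del i j from by simp [del],
        ih1, ih2, ih3]
      rw [Finset.sum_range_succ' (fun ℓ => delV (i+1) (j+1) ℓ) (i+1)]
      have hrec : ∑ ℓ ∈ Finset.range (i+1), delV (i+1) (j+1) (ℓ+1) =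
          (∑ ℓ ∈ Finset.range (i+1), delV i (j+1) (ℓ+1)) +
          (∑ ℓ ∈ Finset.range (i+1), delV (i+1) j (ℓ+1)) +
          (∑ ℓ ∈ Finset.range (i+1), delV i j ℓ) := by
        rw [← Finset.sum_add_distrib, ← Finset.sum_add_distrib]
        exact Finset.sum_congr rfl fun ℓ _ => delV_rec i j ℓ
      rw [hrec, delV_zero]
      have hS1 : ∑ ℓ ∈ Finset.range (i+1), delV i (j+1) ℓ =
          (∑ ℓ ∈ Finset.range (i+1), delV i (j+1) (ℓ+1)) + delV i (j+1) 0 := by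
        rw [Finset.sum_range_succ (fun ℓ => delV i (j+1) (ℓ+1)) i]
        have : delV i (j+1) (i+1) = 0 := by
          unfold delV
          rw [Nat.choose_eq_zero_of_lt (show i < i + 1 from by omega)]
          ring
        rw [this, add_zero, ← Finset.sum_range_succ' (fun ℓ => delV i (j+1) ℓ) i]
      have hS2 : ∑ ℓ ∈ Finset.range (i+2), delV (i+1) j ℓ =
          (∑ ℓ ∈ Finset.range (i+1), delV (i+1) j (ℓ+1)) + delV (i+1) j 0 :=
        Finset.sum_range_succ' (fun ℓ => delV (i+1) j ℓ) (i+1)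
      rw [hS1, hS2]
      ring

lemma fact_eq_delV {i j ℓ : ℕ} (h1 : ℓ ≤ i) (h2 : ℓ ≤ j) :
    Nat.factorial (i + j - ℓ) /
      (Nat.factorial (i - ℓ) * Nat.factorial (j - ℓ) * Nat.factorial ℓ) = delV i j ℓ := by
  obtain ⟨a, rfl⟩ : ∃ a, i = ℓ + a := ⟨i - ℓ, by omega⟩
  obtain ⟨b, rfl⟩ : ∃ b, j = ℓ + b := ⟨j - ℓ, by omega⟩
  unfold delV
  have e1 : ℓ + a + (ℓ + b) - ℓ = a + b + ℓ := by omega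
  have e2 : ℓ + a - ℓ = a := by omega
  have e3 : ℓ + b - ℓ = b := by omega
  rw [e1, e2, e3]
  have k1 : Nat.choose (a+b+ℓ) (ℓ+a) * (ℓ+a).factorial * b.factorial = (a+b+ℓ).factorial := by
    have := Nat.choose_mul_factorial_mul_factorial (show ℓ + a ≤ a + b + ℓ from by omega)
    rwa [show a + b + ℓ - (ℓ + a) = b from by omega] at this
  have k2 : Nat.choose (ℓ+a) ℓ * ℓ.factorial * a.factorial = (ℓ+a).factorial := by
    have := Nat.choose_mul_factorial_mul_factorial (show ℓ ≤ ℓ + a from by omega)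
    rwa [show ℓ + a - ℓ = a from by omega] at this
  have key : (a+b+ℓ).factorial =
      (Nat.choose (a+b+ℓ) (ℓ+a) * Nat.choose (ℓ+a) ℓ) *
        (a.factorial * b.factorial * ℓ.factorial) := by
    calc (a+b+ℓ).factorial = Nat.choose (a+b+ℓ) (ℓ+a) * (ℓ+a).factorial * b.factorial := k1.symm
    _ = Nat.choose (a+b+ℓ) (ℓ+a) * (Nat.choose (ℓ+a) ℓ * ℓ.factorial * a.factorial) *
          b.factorial := by rw [k2]
    _ = _ := by ring
  rw [key, Nat.mul_div_cancel]
  positivity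

theorem stmt2 (i j : ℕ) :
    del i j = ∑ ℓ ∈ Finset.range (i+1),
      if ℓ ≤ j then
        Nat.factorial (i + j - ℓ) /
          (Nat.factorial (i - ℓ) * Nat.factorial (j - ℓ) * Nat.factorial ℓ)
      else 0 := by
  rw [del_eq_sum]
  refine Finset.sum_congr rfl fun ℓ hℓ => ?_
  have hℓi : ℓ ≤ i := by
    have := Finset.mem_range.1 hℓ
    omega
  by_cases hj : ℓ ≤ j
  · rw [if_pos hj, fact_eq_delV hℓi hj]
  · rw [if_neg hj]
    unfold delV
    rw [Nat.choose_eq_zero_of_lt (show i + j - ℓ < i from by omega)]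
    ring
end

section
/- For all non-negative integers i, j with i \geq 1, one has H(i,j) = \sum_{\ell} \binom{i-1}{\ell-1}\binom{j+1}{\ell} 2^{\ell}, where H(i,j) = D(i,j) + D(i-1,j). -/
open Finset Nat

lemma del_key (i j : ℕ) :
    ∑ k ∈ range (j+2), (i+1).choose k * (j+1).choose k * 2^k
    = ∑ k ∈ range (j+2), i.choose k * (j+1).choose k * 2^k
    + ∑ k ∈ range (j+1), (i+1).choose k * j.choose k * 2^k
    + ∑ k ∈ range (j+1), i.choose k * j.choose k * 2^k := by
  rw [Finset.sum_range_succ' (fun k => (i+1).choose k * (j+1).choose k * 2^k) (j+1),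
      Finset.sum_range_succ' (fun k => i.choose k * (j+1).choose k * 2^k) (j+1),
      Finset.sum_range_succ' (fun k => (i+1).choose k * j.choose k * 2^k) j,
      Finset.sum_range_succ' (fun k => i.choose k * j.choose k * 2^k) j]
  simp only [Nat.choose_zero_right, pow_zero, mul_one, one_mul]
  have e1 : ∑ k ∈ range j, (i+1).choose (k+1) * j.choose (k+1) * 2^(k+1)
      = ∑ k ∈ range (j+1), (i+1).choose (k+1) * j.choose (k+1) * 2^(k+1) := by
    rw [Finset.sum_range_succ]; simp [Nat.choose_succ_self]
  have e2 : ∑ k ∈ range j, i.choose (k+1) * j.choose (k+1) * 2^(k+1)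
      = ∑ k ∈ range (j+1), i.choose (k+1) * j.choose (k+1) * 2^(k+1) := by
    rw [Finset.sum_range_succ]; simp [Nat.choose_succ_self]
  rw [e1, e2]
  simp only [Nat.choose_succ_succ i, Nat.choose_succ_succ j]
  simp only [Nat.succ_eq_add_one]
  have split : ∑ x ∈ range (j+1), (i.choose x + i.choose (x+1)) * (j.choose x + j.choose (x+1)) * 2^(x+1)
      = ∑ x ∈ range (j+1), i.choose x * j.choose x * 2^(x+1)
      + ∑ x ∈ range (j+1), (i.choose x * j.choose (x+1) + i.choose (x+1) * j.choose x + i.choose (x+1) * j.choose (x+1)) * 2^(x+1) := by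
    rw [← Finset.sum_add_distrib]; exact Finset.sum_congr rfl fun k _ => by ring
  have h2 : ∑ x ∈ range (j+1), i.choose x * j.choose x * 2^(x+1)
      = 2 + ∑ x ∈ range (j+1), 2 * (i.choose (x+1) * j.choose (x+1) * 2^(x+1)) := by
    rw [Finset.sum_range_succ' (fun x => i.choose x * j.choose x * 2^(x+1)) j,
        Finset.sum_range_succ (fun x => 2 * (i.choose (x+1) * j.choose (x+1) * 2^(x+1))) j]
    simp [Nat.choose_succ_self]
    have : ∑ x ∈ range j, i.choose (x+1) * j.choose (x+1) * 2^(x+1+1)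
        = ∑ x ∈ range j, 2*(i.choose (x+1) * j.choose (x+1) * 2^(x+1)) :=
      Finset.sum_congr rfl fun k _ => by ring
    omega
  rw [split, h2]
  have merge : ∑ x ∈ range (j+1), 2*(i.choose (x+1)*j.choose (x+1)*2^(x+1))
      + ∑ x ∈ range (j+1), (i.choose x * j.choose (x+1) + i.choose (x+1)*j.choose x + i.choose (x+1)*j.choose (x+1)) * 2^(x+1)
      = ∑ x ∈ range (j+1), i.choose (x+1) * (j.choose x + j.choose (x+1)) * 2^(x+1)
      + ∑ x ∈ range (j+1), (i.choose x + i.choose (x+1)) * j.choose (x+1) * 2^(x+1)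
      + ∑ x ∈ range (j+1), i.choose (x+1) * j.choose (x+1) * 2^(x+1) := by
    rw [← Finset.sum_add_distrib, ← Finset.sum_add_distrib, ← Finset.sum_add_distrib]
    exact Finset.sum_congr rfl fun k _ => by ring
  omega

lemma del_closed : ∀ i j : ℕ, del i j =
    ∑ k ∈ Finset.range (j+1), Nat.choose i k * Nat.choose j k * 2 ^ k := by
  apply del.induct
  · simp [del]
  · intro j ih
    rw [show del 0 (j+1) = del 0 j from by rw [del]]
    rw [ih]
    simp [Finset.sum_range_succ', Nat.choose_succ_self]
  · intro i ih
    rw [show del (i+1) 0 = del i 0 from by rw [del]]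
    rw [ih]
    simp
  · intro i j ih1 ih2 ih3
    rw [show del (i+1) (j+1) = del i (j+1) + del (i+1) j + del i j from by rw [del]]
    rw [ih1, ih2, ih3]
    exact (del_key i j).symm

/-- `H(i,j) = D(i,j) + D(i-1,j)`, stated for `i ≥ 1`. -/
theorem stmt3 (i j : ℕ) (hi : 1 ≤ i) :
    del i j + del (i-1) j =
      ∑ ℓ ∈ Finset.Icc 1 (j+1), Nat.choose (i-1) (ℓ-1) * Nat.choose (j+1) ℓ * 2 ^ ℓ := by
  obtain ⟨m, rfl⟩ : ∃ m, i = m + 1 := ⟨i - 1, by omega⟩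
  simp only [Nat.add_sub_cancel]
  rw [← Finset.Ico_add_one_right_eq_Icc, Finset.sum_Ico_eq_sum_range]
  simp only [show j + 1 + 1 - 1 = j + 1 from rfl, Nat.add_sub_cancel_left,
    show ∀ k, 1 + k = k + 1 from fun k => by omega]
  rw [del_closed, del_closed, ← Finset.sum_add_distrib]
  -- goal: ∑ k < j+1, (C(m+1,k)C(j,k)2^k + C(m,k)C(j,k)2^k) = ∑ k < j+1, C(m,k)C(j+1,k+1)2^(k+1)
  simp only [Nat.succ_eq_add_one, Nat.add_sub_cancel]
  simp only [Nat.choose_succ_succ j, Nat.succ_eq_add_one]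
  have rsplit : ∑ k ∈ range (j+1), m.choose k * (j.choose k + j.choose (k+1)) * 2^(k+1)
      = ∑ k ∈ range (j+1), 2 * (m.choose k * j.choose k * 2^k)
      + ∑ k ∈ range (j+1), m.choose k * j.choose (k+1) * 2^(k+1) := by
    rw [← Finset.sum_add_distrib]; exact Finset.sum_congr rfl fun k _ => by ring
  rw [rsplit]
  rw [Finset.sum_range_succ' (fun k => (m+1).choose k * j.choose k * 2^k + m.choose k * j.choose k * 2^k) (j),
      Finset.sum_range_succ' (fun k => 2 * (m.choose k * j.choose k * 2^k)) (j),
      Finset.sum_range_succ (fun k => m.choose k * j.choose (k+1) * 2^(k+1)) j]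
  simp only [Nat.choose_zero_right, pow_zero, mul_one, Nat.choose_succ_self, mul_zero, zero_mul,
    add_zero]
  have : ∑ k ∈ range j, ((m+1).choose (k+1) * j.choose (k+1) * 2^(k+1) + m.choose (k+1) * j.choose (k+1) * 2^(k+1))
      = ∑ k ∈ range j, 2 * (m.choose (k+1) * j.choose (k+1) * 2^(k+1))
      + ∑ k ∈ range j, m.choose k * j.choose (k+1) * 2^(k+1) := by
    rw [← Finset.sum_add_distrib]
    refine Finset.sum_congr rfl fun k _ => ?_
    rw [Nat.choose_succ_succ m]
    ring
  omega
end

section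
/- For every non-negative integer i, \sum_{m=0}^{i} \binom{i}{m}\binom{-1/2}{m} 2^{m} equals 0 if i is odd, and equals |\binom{-1/2}{i/2}| = \frac{(i-1)!!}{2^{i/2}(i/2)!} if i is even. -/
/-- Generalized binomial coefficient `x(x-1)⋯(x-m+1)/m!` for real `x`. -/
noncomputable def rchoose (x : ℝ) (m : ℕ) : ℝ := (∏ t ∈ Finset.range m, (x - t)) / Nat.factorial m

/-- The sum under consideration. -/
noncomputable def Sq (n : ℕ) : ℝ :=
  ∑ m ∈ Finset.range (n+1), (Nat.choose n m : ℝ) * rchoose (-1/2) m * 2 ^ m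

lemma rchoose_succ (x : ℝ) (k : ℕ) :
    rchoose x (k+1) = rchoose x k * (x - k) / (k+1) := by
  unfold rchoose
  rw [Finset.prod_range_succ, Nat.factorial_succ]
  push_cast
  rw [div_mul_eq_mul_div, div_div, mul_comm ((k:ℝ)+1)]

lemma a_step (m : ℕ) :
    ((m:ℝ)+1) * (rchoose (-1/2) (m+1) * 2 ^ (m+1)) =
      -(2*(m:ℝ)+1) * (rchoose (-1/2) m * 2 ^ m) := by
  rw [rchoose_succ]
  have h2 : ((m:ℝ)+1) ≠ 0 := by positivity
  field_simp
  ring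

lemma choose_real_1 (n m : ℕ) :
    (Nat.choose (n+1) m : ℝ) * ((n:ℝ)+1-m) = ((n:ℝ)+1) * Nat.choose n m := by
  rcases le_or_gt m n with h | h
  · have hnat : Nat.choose (n+1) m * (n+1-m) = (n+1) * Nat.choose n m :=
      (Nat.choose_succ_right_eq (n+1) m).symm.trans (Nat.add_one_mul_choose_eq n m).symm
    have hcast : ((n:ℝ)+1-m) = ((n+1-m : ℕ) : ℝ) := by
      have hm : m ≤ n+1 := le_trans h (Nat.le_succ n)
      push_cast [Nat.cast_sub hm]
      ring
    rw [hcast]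
    exact_mod_cast hnat
  · rcases eq_or_lt_of_le (Nat.succ_le_of_lt h) with h' | h'
    · rw [← h', Nat.choose_succ_self]
      push_cast
      ring
    · rw [Nat.choose_eq_zero_of_lt h', Nat.choose_eq_zero_of_lt (by omega)]
      ring

lemma choose_real_2 (n m : ℕ) :
    (Nat.choose n (m+1) : ℝ) * ((m:ℝ)+1) = (Nat.choose n m : ℝ) * ((n:ℝ)-m) := by
  rcases le_or_gt (m+1) n with h | h
  · have hnat := Nat.choose_succ_right_eq n m
    have hcast : ((n:ℝ)-m) = ((n-m : ℕ) : ℝ) := by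
      push_cast [Nat.cast_sub (le_trans (Nat.le_succ m) h)]
      ring
    rw [hcast]
    exact_mod_cast hnat
  · rcases eq_or_lt_of_le (Nat.le_of_lt_succ h) with h' | h'
    · rw [h', Nat.choose_eq_zero_of_lt (by omega), Nat.choose_self]
      push_cast
      ring
    · rw [Nat.choose_eq_zero_of_lt (by omega), Nat.choose_eq_zero_of_lt h']
      ring

lemma Sq_ext (n N : ℕ) (h : n + 1 ≤ N) :
    Sq n = ∑ m ∈ Finset.range N, (Nat.choose n m : ℝ) * rchoose (-1/2) m * 2 ^ m := by
  unfold Sq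
  rw [← Finset.sum_range_add_sum_Ico _ h]
  have hz : ∑ m ∈ Finset.Ico (n+1) N, (Nat.choose n m : ℝ) * rchoose (-1/2) m * 2 ^ m = 0 := by
    apply Finset.sum_eq_zero
    intro m hm
    rw [Finset.mem_Ico] at hm
    rw [Nat.choose_eq_zero_of_lt (by omega)]
    ring
  rw [hz, add_zero]

lemma Sq_rec (n : ℕ) : ((n:ℝ)+2) * Sq (n+2) = ((n:ℝ)+1) * Sq n := by
  set f : ℕ → ℝ := fun m => -((m:ℝ)^2) * Nat.choose (n+2) m * (rchoose (-1/2) m * 2^m)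
    with hf
  have key : ((n:ℝ)+2)^2 * Sq (n+2) - ((n:ℝ)+1)*((n:ℝ)+2) * Sq n =
      ∑ m ∈ Finset.range (n+3), (f (m+1) - f m) := by
    rw [Sq_ext n (n+3) (by omega), Sq_ext (n+2) (n+3) (by omega),
      Finset.mul_sum, Finset.mul_sum, ← Finset.sum_sub_distrib]
    apply Finset.sum_congr rfl
    intro m _
    have hA' := a_step m
    have h3 := choose_real_2 (n+2) m
    have h1 := choose_real_1 (n+1) m
    have h2 := choose_real_1 n m
    simp only [hf]
    push_cast at h3 h1 h2 ⊢
    linear_combination (((m:ℝ)+1) * (Nat.choose (n+2) (m+1) : ℝ)) * hA'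
      + (-(2*(m:ℝ)+1) * (rchoose (-1/2) m * 2^m)) * h3
      + (((n:ℝ)+1-m) * (rchoose (-1/2) m * 2^m)) * h1
      + (((n:ℝ)+2) * (rchoose (-1/2) m * 2^m)) * h2
  rw [Finset.sum_range_sub f] at key
  have hf0 : f 0 = 0 := by simp [hf]
  have hfN : f (n+3) = 0 := by
    simp only [hf]
    rw [Nat.choose_eq_zero_of_lt (by omega)]
    push_cast
    ring
  rw [hf0, hfN, sub_zero] at key
  have h2 : ((n:ℝ)+2) ≠ 0 := by positivity
  have hmul : ((n:ℝ)+2) * (((n:ℝ)+2) * Sq (n+2) - ((n:ℝ)+1) * Sq n) = 0 := by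
    nlinarith [key]
  rcases mul_eq_zero.mp hmul with h | h
  · exact absurd h h2
  · linarith

lemma Sq_odd (k : ℕ) : Sq (2*k+1) = 0 := by
  induction k with
  | zero =>
    unfold Sq
    rw [Finset.sum_range_succ, Finset.sum_range_succ, Finset.sum_range_zero]
    have h1 : rchoose (-1/2) 1 = -1/2 := by
      unfold rchoose; norm_num
    have h0 : rchoose (-1/2) 0 = 1 := by
      unfold rchoose; norm_num
    rw [h0, h1]; norm_num
  | succ k ih =>
    have h := Sq_rec (2*k+1)
    have heq : 2*(k+1)+1 = (2*k+1)+2 := by ring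
    rw [heq]
    push_cast at h
    rw [ih] at h
    nlinarith [h]

lemma doubleFac_step (k : ℕ) :
    Nat.doubleFactorial (2*(k+1)-1) = (2*k+1) * Nat.doubleFactorial (2*k-1) := by
  cases k with
  | zero => simp [Nat.doubleFactorial]
  | succ k =>
    have h1 : 2*(k+1+1)-1 = (2*k+1)+2 := by omega
    have h2 : 2*(k+1)-1 = 2*k+1 := by omega
    rw [h1, h2, Nat.doubleFactorial_add_two]
    have h3 : 2*k+1+2 = 2*(k+1)+1 := by omega
    rw [h3]

lemma Sq_even (k : ℕ) :
    Sq (2*k) = (Nat.doubleFactorial (2*k-1) : ℝ) / (2^k * Nat.factorial k) := by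
  induction k with
  | zero =>
    unfold Sq
    rw [Finset.sum_range_succ, Finset.sum_range_zero]
    have h0 : rchoose (-1/2) 0 = 1 := by unfold rchoose; norm_num
    rw [h0]
    simp [Nat.doubleFactorial]
  | succ k ih =>
    have h := Sq_rec (2*k)
    have heq : 2*(k+1) = (2*k)+2 := by ring
    rw [heq]
    push_cast at h
    rw [ih] at h
    have hdf := doubleFac_step k
    rw [heq] at hdf
    rw [hdf, Nat.factorial_succ]
    have hf : (Nat.factorial k : ℝ) ≠ 0 := by positivity
    have hne : (2*(k:ℝ)+2) ≠ 0 := by positivity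
    have h2k : ((2:ℝ))^k ≠ 0 := by positivity
    push_cast
    field_simp at h ⊢
    linear_combination h

lemma rchoose_closed (k : ℕ) :
    rchoose (-1/2) k = (-1)^k * (Nat.doubleFactorial (2*k-1) : ℝ) / (2^k * Nat.factorial k) := by
  induction k with
  | zero => unfold rchoose; simp [Nat.doubleFactorial]
  | succ k ih =>
    have hdf := doubleFac_step k
    rw [rchoose_succ, ih, hdf, Nat.factorial_succ]
    push_cast
    have hf : (Nat.factorial k : ℝ) ≠ 0 := by positivity
    field_simp
    ring

theorem stmt8 (i : ℕ) :
    (Odd i → ∑ m ∈ Finset.range (i+1), (Nat.choose i m : ℝ) * rchoose (-1/2) m * 2 ^ m = 0) ∧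
    (Even i →
      (∑ m ∈ Finset.range (i+1), (Nat.choose i m : ℝ) * rchoose (-1/2) m * 2 ^ m
          = |rchoose (-1/2) (i/2)|) ∧
      (∑ m ∈ Finset.range (i+1), (Nat.choose i m : ℝ) * rchoose (-1/2) m * 2 ^ m
          = (Nat.doubleFactorial (i-1) : ℝ) / (2 ^ (i/2) * Nat.factorial (i/2)))) := by
  constructor
  · intro hodd
    obtain ⟨k, hk⟩ := hodd
    have hi : i = 2*k+1 := by omega
    subst hi
    exact Sq_odd k
  · intro heven
    obtain ⟨k, hk⟩ := heven
    have hi : i = 2*k := by omega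
    subst hi
    have hdiv : 2*k/2 = k := by omega
    have h2 : ∑ m ∈ Finset.range (2*k+1), (Nat.choose (2*k) m : ℝ) * rchoose (-1/2) m * 2 ^ m
        = (Nat.doubleFactorial (2*k-1) : ℝ) / (2 ^ (2*k/2) * Nat.factorial (2*k/2)) := by
      rw [hdiv]
      exact Sq_even k
    refine ⟨?_, h2⟩
    rw [h2, hdiv, rchoose_closed, abs_div, abs_mul, abs_pow, abs_neg, abs_one, one_pow,
      one_mul, Nat.abs_cast, abs_of_pos (by positivity : (0:ℝ) < 2^k * Nat.factorial k)]
end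

section
/- Let s, a, k, i be non-negative integers with 0 \leq a \leq s, k \geq 2s - a + 2, and k \equiv a (mod 2). Then \sum_{\ell=0}^{k-2i+2s-a+1} \binom{s+k-2i-\ell}{\ell}\binom{k+3s-2a+1-2i-2\ell}{k+2s-a+1-2i-\ell} = 0 for every integer i with 0 \leq i \leq k-1. -/
/-- Generalized binomial coefficient `N(N-1)⋯(N-r+1)/r!` for integer `N` (possibly
negative), equal to `0` for `r < 0`. -/
def zchoose (N r : ℤ) : ℚ :=
  if 0 ≤ r then (∏ t ∈ Finset.range r.toNat, ((N : ℚ) - t)) / Nat.factorial r.toNat else 0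

lemma zchoose_reflect (N r : ℤ) (hr : 0 ≤ r) :
    zchoose N r = (-1) ^ r.toNat * zchoose (r - N - 1) r := by
  unfold zchoose
  rw [if_pos hr, if_pos hr, ← mul_div_assoc]
  congr 1
  rw [← Finset.prod_range_reflect (fun t => ((((r : ℤ) - N - 1 : ℤ) : ℚ) - t)) r.toNat]
  have hrq : ((r : ℤ) : ℚ) = (r.toNat : ℚ) := by
    exact_mod_cast congrArg (fun z : ℤ => (z : ℚ)) (Int.toNat_of_nonneg hr).symm
  rw [show ((-1:ℚ) ^ r.toNat) = ∏ _t ∈ Finset.range r.toNat, (-1:ℚ) by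
    rw [Finset.prod_const, Finset.card_range], ← Finset.prod_mul_distrib]
  apply Finset.prod_congr rfl
  intro t ht
  simp only [Finset.mem_range] at ht
  push_cast
  rw [hrq]
  rw [Nat.cast_sub (by omega : t ≤ r.toNat - 1), Nat.cast_sub (by omega : 1 ≤ r.toNat)]
  push_cast
  ring

theorem stmt12 (s a k i : ℤ) (ha : 0 ≤ a) (has : a ≤ s) (hk : 2*s - a + 2 ≤ k)
    (hpar : k % 2 = a % 2) (hi : 0 ≤ i) (hik : i ≤ k - 1) :
    ∑ ℓ ∈ Finset.Icc (0 : ℤ) (k - 2*i + 2*s - a + 1),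
      zchoose (s + k - 2*i - ℓ) ℓ *
        zchoose (k + 3*s - 2*a + 1 - 2*i - 2*ℓ) (k + 2*s - a + 1 - 2*i - ℓ) = 0 := by
  set M : ℤ := k - 2*i + 2*s - a + 1 with hM
  set f : ℤ → ℚ := fun ℓ => zchoose (s + k - 2*i - ℓ) ℓ *
        zchoose (k + 3*s - 2*a + 1 - 2*i - 2*ℓ) (k + 2*s - a + 1 - 2*i - ℓ) with hf
  by_cases hM0 : M < 0
  · rw [Finset.Icc_eq_empty (by omega)]
    simp
  push_neg at hM0
  have hModd : M % 2 = 1 := by omega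
  have key : ∀ ℓ ∈ Finset.Icc (0 : ℤ) M, f (M - ℓ) = - f ℓ := by
    intro ℓ hℓ
    simp only [Finset.mem_Icc] at hℓ
    obtain ⟨h0, h1⟩ := hℓ
    simp only [hf]
    have e1 : k + 2*s - a + 1 - 2*i - (M - ℓ) = ℓ := by omega
    rw [e1]
    have h2 : zchoose (s + k - 2*i - (M - ℓ)) (M - ℓ) =
        (-1) ^ (M - ℓ).toNat * zchoose (k + 3*s - 2*a + 1 - 2*i - 2*ℓ) (M - ℓ) := by
      have := zchoose_reflect (s + k - 2*i - (M - ℓ)) (M - ℓ) (by omega)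
      have e : (M - ℓ) - (s + k - 2*i - (M - ℓ)) - 1 = k + 3*s - 2*a + 1 - 2*i - 2*ℓ := by omega
      rw [e] at this
      exact this
    have h3 : zchoose (k + 3*s - 2*a + 1 - 2*i - 2*(M - ℓ)) ℓ =
        (-1) ^ ℓ.toNat * zchoose (s + k - 2*i - ℓ) ℓ := by
      have := zchoose_reflect (k + 3*s - 2*a + 1 - 2*i - 2*(M - ℓ)) ℓ h0
      have e : ℓ - (k + 3*s - 2*a + 1 - 2*i - 2*(M - ℓ)) - 1 = s + k - 2*i - ℓ := by omega
      rw [e] at this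
      exact this
    have e4 : k + 2*s - a + 1 - 2*i - ℓ = M - ℓ := by omega
    rw [h2, h3, e4]
    have hsign : (-1 : ℚ) ^ (M - ℓ).toNat * (-1) ^ ℓ.toNat = -1 := by
      rw [← pow_add]
      have hMt : (M - ℓ).toNat + ℓ.toNat = M.toNat := by omega
      rw [hMt]
      have hMo : M.toNat = 2 * (M.toNat / 2) + 1 := by omega
      rw [hMo, pow_succ, pow_mul]
      norm_num
    calc (-1 : ℚ) ^ (M - ℓ).toNat * zchoose (k + 3*s - 2*a + 1 - 2*i - 2*ℓ) (M - ℓ) *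
          ((-1) ^ ℓ.toNat * zchoose (s + k - 2*i - ℓ) ℓ)
        = ((-1 : ℚ) ^ (M - ℓ).toNat * (-1) ^ ℓ.toNat) *
          (zchoose (s + k - 2*i - ℓ) ℓ * zchoose (k + 3*s - 2*a + 1 - 2*i - 2*ℓ) (M - ℓ)) := by
          ring
      _ = - (zchoose (s + k - 2*i - ℓ) ℓ * zchoose (k + 3*s - 2*a + 1 - 2*i - 2*ℓ) (M - ℓ)) := by
          rw [hsign]; ring
  have hrefl : ∑ ℓ ∈ Finset.Icc (0 : ℤ) M, f ℓ = ∑ ℓ ∈ Finset.Icc (0 : ℤ) M, f (M - ℓ) := by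
    refine Finset.sum_nbij' (fun ℓ => M - ℓ) (fun ℓ => M - ℓ) ?_ ?_ ?_ ?_ ?_ <;>
      intro x hx <;> simp only [Finset.mem_Icc] at * <;>
      first
        | omega
        | (congr 1; omega)
  have hneg : ∑ ℓ ∈ Finset.Icc (0 : ℤ) M, f ℓ = - ∑ ℓ ∈ Finset.Icc (0 : ℤ) M, f ℓ := by
    nth_rewrite 1 [hrefl]
    rw [← Finset.sum_neg_distrib]
    exact Finset.sum_congr rfl key
  have hgoal : (Finset.Icc (0:ℤ) M).sum f = ∑ ℓ ∈ Finset.Icc (0 : ℤ) M, f ℓ := rfl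
  show (Finset.Icc (0:ℤ) M).sum f = 0
  rw [hgoal]
  linarith
end

section
/- Let s, a, k, i be integers with 0 \leq a \leq s, k \geq 2s - a + 1, k \not\equiv a (mod 2), and 0 \leq i \leq k-1. Then \sum_{\ell=0}^{k-2i+2s-a} \binom{s - 1/2 + k - 2i - \ell}{\ell}\binom{k + 3s - 2a - 1/2 - 2i - 2\ell}{k + 2s - a - 2i - \ell} = 0, where \binom{x}{r} for real x and integer r is x(x-1)\cdots(x-r+1)/r! for r \geq 0 and 0 for r < 0. -/
/-- Generalized binomial coefficient `x(x-1)⋯(x-r+1)/r!` for real `x` and integer `r`,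
equal to `0` for `r < 0`. -/
noncomputable def rchooseZ (x : ℝ) (r : ℤ) : ℝ :=
  if 0 ≤ r then (∏ t ∈ Finset.range r.toNat, (x - t)) / Nat.factorial r.toNat else 0

lemma rchooseZ_reflect (x : ℝ) (r : ℤ) (hr : 0 ≤ r) :
    rchooseZ x r = (-1) ^ r.toNat * rchooseZ ((r : ℝ) - 1 - x) r := by
  unfold rchooseZ
  rw [if_pos hr, if_pos hr, ← mul_div_assoc]
  congr 1
  have hcast : ((r : ℝ)) = (r.toNat : ℝ) := by exact_mod_cast (Int.toNat_of_nonneg hr).symm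
  rw [hcast]
  set n := r.toNat with hn
  rw [← Finset.prod_range_reflect (fun t => x - t) n]
  have hstep : ∀ t ∈ Finset.range n, ((n : ℝ) - 1 - x - t) = (-1) * (x - ((n - 1 - t : ℕ) : ℝ)) := by
    intro t ht
    simp only [Finset.mem_range] at ht
    have h1 : t ≤ n - 1 := by omega
    have h2 : 1 ≤ n := by omega
    push_cast [Nat.cast_sub h1, Nat.cast_sub h2]
    ring
  rw [Finset.prod_congr rfl hstep, Finset.prod_mul_distrib, Finset.prod_const, Finset.card_range,
    ← mul_assoc, ← mul_pow]
  norm_num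

lemma key13 (X : ℝ) (m : ℤ) (hm : m % 2 = 1) :
    ∑ ℓ ∈ Finset.Icc (0 : ℤ) m,
      rchooseZ (X - ℓ) ℓ * rchooseZ (2 * (m : ℝ) - 1 - X - 2 * ℓ) (m - ℓ) = 0 := by
  apply Finset.sum_involution (g := fun ℓ _ => m - ℓ)
  · intro ℓ hℓ
    simp only [Finset.mem_Icc] at hℓ
    have h1 : rchooseZ (X - ℓ) ℓ
        = (-1) ^ ℓ.toNat * rchooseZ (2 * (m : ℝ) - 1 - X - 2 * ((m : ℝ) - ℓ)) ℓ := by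
      rw [rchooseZ_reflect _ _ hℓ.1]; congr 2; ring
    have h2 : rchooseZ (2 * (m : ℝ) - 1 - X - 2 * ℓ) (m - ℓ)
        = (-1) ^ (m - ℓ).toNat * rchooseZ (X - ((m : ℝ) - ℓ)) (m - ℓ) := by
      rw [rchooseZ_reflect _ _ (by omega : (0 : ℤ) ≤ m - ℓ)]
      congr 2
      push_cast
      ring
    have hpow : (-1 : ℝ) ^ ℓ.toNat * (-1) ^ (m - ℓ).toNat = -1 := by
      rw [← pow_add]
      have h3 : ℓ.toNat + (m - ℓ).toNat = m.toNat := by omega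
      rw [h3]
      exact Odd.neg_one_pow ⟨m.toNat / 2, by omega⟩
    rw [h1, h2]
    have h4 : m - (m - ℓ) = ℓ := by ring
    rw [h4]
    push_cast
    linear_combination (rchooseZ (2 * (m : ℝ) - 1 - X - 2 * ((m : ℝ) - ℓ)) ℓ *
      rchooseZ (X - ((m : ℝ) - ℓ)) (m - ℓ)) * hpow
  · intro ℓ hℓ _
    simp only [Finset.mem_Icc] at hℓ
    omega
  · intro ℓ hℓ
    simp only [Finset.mem_Icc] at hℓ ⊢
    omega
  · intro ℓ hℓ
    ring

theorem stmt13 (s a k i : ℤ) (ha : 0 ≤ a) (has : a ≤ s) (hk : 2*s - a + 1 ≤ k)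
    (hpar : k % 2 ≠ a % 2) (hi : 0 ≤ i) (hik : i ≤ k - 1) :
    ∑ ℓ ∈ Finset.Icc (0 : ℤ) (k - 2*i + 2*s - a),
      rchooseZ ((s : ℝ) - 1/2 + k - 2*i - ℓ) ℓ *
        rchooseZ ((k : ℝ) + 3*s - 2*a - 1/2 - 2*i - 2*ℓ) (k + 2*s - a - 2*i - ℓ) = 0 := by
  have hm : (k - 2*i + 2*s - a) % 2 = 1 := by omega
  have := key13 ((s : ℝ) - 1/2 + k - 2*i) (k - 2*i + 2*s - a) hm
  rw [← this]
  apply Finset.sum_congr rfl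
  intro ℓ hℓ
  have hidx : k + 2*s - a - 2*i - ℓ = (k - 2*i + 2*s - a) - ℓ := by ring
  rw [hidx]
  congr 2 <;> push_cast <;> ring
end

section
/- For every non-negative integer k, \det_{0 \leq i,j \leq k-1}\left(\frac{2^{k-2i+j}}{(k-2i+j)!}\right) = 2^{k^2} \prod_{i=1}^{k} \frac{1}{(i)_i}, where 1/m! is interpreted as 0 for negative integers m, and (x)_i = x(x+1)\cdots(x+i-1) is the Pochhammer symbol. -/
/-!
Reversing the order of rows and columns turns the entry in position `(i, j)` into `f (2i + 1 - j)`,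
where `f m = 2^m / m!`. Since `2^j f (n - j) = f n · n (n - 1) ⋯ (n - j + 1)` (both sides vanish
when `0 ≤ n < j`), the factor `f (2i + 1)` comes out of row `i`, and what remains has entries
`p_j (i)` for the monic polynomials `p_j (x) = 2^{-j} (2x + 1) (2x) ⋯ (2x + 2 - j)` of degree `j`.
Its determinant is therefore the Vandermonde determinant of `0, 1, …, k - 1`, namely `∏ i!`, and
`f (2i + 1) · i! = 2^{2i+1} / (i + 1)_{i + 1}` gives the formula.
-/

open Polynomial Finset Nat

theorem Matrix.det_vandermonde_natCast {R : Type*} [CommRing R] (k : ℕ) :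
    (vandermonde fun i : Fin k => (i : R)).det = ∏ i : Fin k, (i ! : R) := by
  cases k with
  | zero => simp
  | succ n =>
    rw [det_vandermonde_id_eq_superFactorial, ← prod_range_factorial_succ,
      Fin.prod_univ_eq_prod_range (fun i => (i ! : R)), prod_range_succ']
    push_cast
    simp

theorem sum_range_two_mul_add_one (k : ℕ) : ∑ i ∈ range k, (2 * i + 1) = k ^ 2 := by
  induction k with
  | zero => rfl
  | succ k ih => rw [sum_range_succ, ih]; ring

section

variable {K : Type*} [Field K]

noncomputable def expCoeff (a : K) (m : ℤ) : K :=
  if 0 ≤ m then a ^ m.toNat / (m.toNat ! : K) else 0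

theorem expCoeff_natCast (a : K) (n : ℕ) : expCoeff a n = a ^ n / (n ! : K) := by
  simp [expCoeff]

theorem det_expCoeff_sub_two_mul_add (a : K) (k : ℕ) :
    (Matrix.of fun i j : Fin k => expCoeff a ((k : ℤ) - 2 * i.1 + j.1)).det
      = (Matrix.of fun i j : Fin k => expCoeff a (2 * i.1 + 1 - j.1)).det := by
  rw [← Matrix.det_submatrix_equiv_self Fin.revPerm]
  congr 1
  ext i j
  simp only [Matrix.submatrix_apply, Matrix.of_apply, Fin.revPerm_apply, Fin.val_rev]
  congr 1
  omega

noncomputable def oddDescPochhammer (j : ℕ) : K[X] :=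
  C ((2 : K) ^ j)⁻¹ * (descPochhammer K j).comp (C 2 * X + 1)

theorem eval_oddDescPochhammer (j : ℕ) (x : K) :
    (oddDescPochhammer j).eval x = ((2 : K) ^ j)⁻¹ * (descPochhammer K j).eval (2 * x + 1) := by
  simp [oddDescPochhammer, eval_comp]

variable [CharZero K]

theorem add_one_mul_expCoeff_add_one (a : K) (m : ℤ) :
    ((m : K) + 1) * expCoeff a (m + 1) = a * expCoeff a m := by
  rcases lt_trichotomy m (-1) with hm | rfl | hm
  · simp [expCoeff, show ¬ 0 ≤ m by omega, show ¬ 0 ≤ m + 1 by omega]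
  · simp [expCoeff]
  · lift m to ℕ using (by omega)
    rw [show (m : ℤ) + 1 = ((m + 1 : ℕ) : ℤ) by push_cast; ring, expCoeff_natCast,
      expCoeff_natCast, factorial_succ, pow_succ]
    push_cast
    field_simp

theorem pow_mul_expCoeff_sub (a : K) (n : ℤ) (t : ℕ) :
    a ^ t * expCoeff a (n - t) = expCoeff a n * (descPochhammer K t).eval (n : K) := by
  induction t with
  | zero => simp
  | succ t ih =>
    have step := add_one_mul_expCoeff_add_one a (n - t - 1)
    rw [sub_add_cancel] at step
    push_cast at step ⊢
    rw [descPochhammer_succ_eval, ← mul_assoc, ← ih, pow_succ, mul_assoc, ← sub_sub, ← step]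
    ring

theorem natDegree_oddDescPochhammer (j : ℕ) : (oddDescPochhammer (K := K) j).natDegree = j := by
  have h2 : (C (2 : K) * X + 1).natDegree = 1 := by compute_degree!
  rw [oddDescPochhammer, natDegree_C_mul (by simp), natDegree_comp, descPochhammer_natDegree, h2,
    mul_one]

theorem monic_oddDescPochhammer (j : ℕ) : (oddDescPochhammer (K := K) j).Monic := by
  have h2 : (C (2 : K) * X + 1).natDegree = 1 := by compute_degree!
  have hl : (C (2 : K) * X + 1).leadingCoeff = 2 := by
    rw [leadingCoeff, h2]
    simp [coeff_one]
  apply monic_C_mul_of_mul_leadingCoeff_eq_one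
  rw [leadingCoeff_comp (by simp [h2]), (monic_descPochhammer K j).leadingCoeff, hl,
    descPochhammer_natDegree]
  simp

theorem det_expCoeff_two_mul_add_one_sub (k : ℕ) :
    (Matrix.of fun i j : Fin k => expCoeff (2 : K) (2 * i.1 + 1 - j.1)).det
      = ∏ i : Fin k, expCoeff (2 : K) (2 * i.1 + 1) * (i.1 ! : K) := by
  have hentry : ∀ i j : Fin k, expCoeff (2 : K) (2 * i.1 + 1 - j.1)
      = expCoeff 2 (2 * i.1 + 1) * (oddDescPochhammer j).eval (i.1 : K) := by
    intro i j
    have h := pow_mul_expCoeff_sub (2 : K) (2 * i.1 + 1) j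
    push_cast at h
    rw [eval_oddDescPochhammer, mul_left_comm, ← h, ← mul_assoc,
      inv_mul_cancel₀ (pow_ne_zero _ two_ne_zero), one_mul]
  have hcol := Matrix.det_mul_column (fun i : Fin k => expCoeff (2 : K) (2 * i.1 + 1))
    (Matrix.of fun i j : Fin k => (oddDescPochhammer j.1).eval (i.1 : K))
  simp only [Matrix.of_apply] at hcol
  simp_rw [hentry]
  rw [hcol, prod_mul_distrib, ← Matrix.det_vandermonde_natCast,
    Matrix.det_eval_matrixOfPolynomials_eq_det_vandermonde _ (fun j => oddDescPochhammer j.1)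
      (fun j => natDegree_oddDescPochhammer j) (fun j => monic_oddDescPochhammer j)]

theorem expCoeff_two_mul_add_one_mul_factorial (a : K) (i : ℕ) :
    expCoeff a (2 * i + 1) * (i ! : K)
      = a ^ (2 * i + 1) * (∏ t ∈ range (i + 1), ((i + 1 + t : ℕ) : K))⁻¹ := by
  have h := factorial_mul_ascFactorial i (i + 1)
  rw [ascFactorial_eq_prod_range, show i + (i + 1) = 2 * i + 1 by ring] at h
  rw [show (2 * i + 1 : ℤ) = ((2 * i + 1 : ℕ) : ℤ) by push_cast; ring, expCoeff_natCast, ← h]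
  push_cast
  have : (i ! : K) ≠ 0 := Nat.cast_ne_zero.mpr (factorial_ne_zero i)
  field_simp

theorem prod_expCoeff_two_mul_add_one_mul_factorial (k : ℕ) :
    ∏ i : Fin k, expCoeff (2 : K) (2 * i.1 + 1) * (i.1 ! : K)
      = 2 ^ (k ^ 2) * ∏ i ∈ Icc 1 k, (∏ t ∈ range i, ((i + t : ℕ) : K))⁻¹ := by
  rw [← Ico_add_one_right_eq_Icc, prod_Ico_eq_prod_range, add_tsub_cancel_right,
    ← sum_range_two_mul_add_one, ← prod_pow_eq_pow_sum, ← prod_mul_distrib,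
    Fin.prod_univ_eq_prod_range (fun i => expCoeff (2 : K) (2 * i + 1) * (i ! : K))]
  refine prod_congr rfl fun i _ => ?_
  rw [expCoeff_two_mul_add_one_mul_factorial, add_comm 1 i]

end

theorem stmt14 (k : ℕ) :
    Matrix.det (fun i j : Fin k =>
      if 0 ≤ (k : ℤ) - 2*i.1 + j.1 then
        (2 : ℚ) ^ ((k : ℤ) - 2*i.1 + j.1).toNat / Nat.factorial ((k : ℤ) - 2*i.1 + j.1).toNat
      else 0)
    = 2 ^ (k^2) * ∏ i ∈ Finset.Icc 1 k, (∏ t ∈ Finset.range i, ((i + t : ℕ) : ℚ))⁻¹ := by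
  rw [← prod_expCoeff_two_mul_add_one_mul_factorial, ← det_expCoeff_two_mul_add_one_sub,
    ← det_expCoeff_sub_two_mul_add]
  rfl
end

section
/- For every even non-negative integer k, \prod_{i=0}^{k/2 - 1} \frac{(4i+2)(4k-4i+2)}{(k+2i+2)(k+2i+3)} = 1. -/
lemma lemA (m : ℕ) : (∏ i ∈ Finset.range m, (4*i+2)) * m.factorial = (2*m).factorial := by
  induction m with
  | zero => simp
  | succ n ih =>
    rw [Finset.prod_range_succ, Nat.factorial_succ]
    have h : 2*(n+1) = (2*n+1)+1 := by ring
    rw [h, Nat.factorial_succ, Nat.factorial_succ, ← ih]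
    ring

lemma lemB (a n : ℕ) : (∏ i ∈ Finset.range n, (a+1+i)) * a.factorial = (a+n).factorial := by
  induction n with
  | zero => simp
  | succ n ih =>
    rw [Finset.prod_range_succ]
    have h : a + (n+1) = (a+n)+1 := by ring
    rw [h, Nat.factorial_succ, ← ih]
    ring

lemma lemC (m : ℕ) : (∏ i ∈ Finset.range m, (4*i+2)) = ∏ i ∈ Finset.range m, (m+1+i) := by
  have h1 := lemA m
  have h2 := lemB m m
  rw [two_mul] at h1
  exact Nat.eq_of_mul_eq_mul_right m.factorial_pos (h1.trans h2.symm)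

theorem stmt15 (k : ℕ) (hk : Even k) :
    ∏ i ∈ Finset.range (k/2),
      ((4*(i:ℚ)+2) * (4*(k:ℚ)-4*i+2)) / (((k:ℚ)+2*i+2) * ((k:ℚ)+2*i+3)) = 1 := by
  obtain ⟨m, hm⟩ := hk
  have hk2 : k = 2*m := by omega
  subst hk2
  have hdiv : 2*m/2 = m := by omega
  rw [hdiv]
  rw [Finset.prod_div_distrib, Finset.prod_mul_distrib, Finset.prod_mul_distrib]
  -- reflect the second numerator product
  have hrefl : ∏ i ∈ Finset.range m, (4*((2*m : ℕ):ℚ)-4*i+2)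
      = ∏ i ∈ Finset.range m, (2*(((2*m:ℕ):ℚ)+2*i+3)) := by
    rw [← Finset.prod_range_reflect]
    apply Finset.prod_congr rfl
    intro i hi
    have hi' : i < m := Finset.mem_range.mp hi
    have : (↑(m - 1 - i) : ℚ) = (m : ℚ) - 1 - i := by
      have : m - 1 - i = m - (1+i) := by omega
      rw [this]
      push_cast [Nat.cast_sub (by omega : 1 + i ≤ m)]
      ring
    rw [this]
    push_cast
    ring
  rw [hrefl, Finset.prod_mul_distrib, Finset.prod_const]
  have hden1 : ∏ i ∈ Finset.range m, (((2*m:ℕ):ℚ)+2*i+2)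
      = ∏ i ∈ Finset.range m, (2*((m:ℚ)+1+i)) := by
    apply Finset.prod_congr rfl
    intro i _
    push_cast
    ring
  rw [hden1, Finset.prod_mul_distrib, Finset.prod_const]
  have hnum : ∏ i ∈ Finset.range m, (4*(i:ℚ)+2) = ∏ i ∈ Finset.range m, ((m:ℚ)+1+i) := by
    have := lemC m
    have h1 : ∏ i ∈ Finset.range m, (4*(i:ℚ)+2)
        = ((∏ i ∈ Finset.range m, (4*i+2) : ℕ) : ℚ) := by
      push_cast
      rfl
    have h2 : ∏ i ∈ Finset.range m, ((m:ℚ)+1+i)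
        = ((∏ i ∈ Finset.range m, (m+1+i) : ℕ) : ℚ) := by
      push_cast
      rfl
    rw [h1, h2, this]
  rw [hnum]
  have hne1 : (∏ i ∈ Finset.range m, ((m:ℚ)+1+i)) ≠ 0 := by
    apply Finset.prod_ne_zero_iff.mpr
    intro i _
    positivity
  have hne2 : (∏ i ∈ Finset.range m, (((2*m:ℕ):ℚ)+2*i+3)) ≠ 0 := by
    apply Finset.prod_ne_zero_iff.mpr
    intro i _
    positivity
  field_simp
end

section
/- For every positive integer n, the number 2^{n(n-1)/2} \prod_{i=0}^{n-1} \frac{(4i+2)!}{(n+2i+1)!} is a positive integer. -/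
/-!
Compare `p`-adic valuations of numerator and denominator via Legendre's formula.

For `p = 2`: `v₂(m!) < m`, while `v₂((4i+2)!) = 3i + 1 + v₂(i!)`; summing over `i < n`, the
bounds `∑ (n + 2i)` and `n(n-1)/2 + ∑ (3i + 1)` coincide.

For odd `p`, Legendre's formula reduces the claim to the inequality
`∑_{i<n} ⌊(n+2i+1)/q⌋ ≤ ∑_{i<n} ⌊(4i+2)/q⌋` for every odd `q = p^k`. Since `2` and `4` are units
mod `q`, the `q` new terms on either side run over complete residue systems when `n` grows by `q`,
and both sides grow by the same amount; this reduces the inequality to `n < q`, where every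
quotient is at most `3` and both sides are counted explicitly.
-/

open Finset Nat

theorem sum_range_add_mul_mod_of_coprime {q c : ℕ} (hc : q.Coprime c) (a : ℕ) :
    ∑ t ∈ range q, (a + c * t) % q = ∑ t ∈ range q, t := by
  have hmaps : Set.MapsTo (fun t => (a + c * t) % q) (range q) (range q) := fun t ht =>
    mem_range.2 (Nat.mod_lt _ (Nat.zero_lt_of_lt (mem_range.1 ht)))
  have hinj : Set.InjOn (fun t => (a + c * t) % q) (range q) := fun x hx y hy h =>
    ((Nat.ModEq.add_left_cancel' a h).cancel_left_of_coprime hc).eq_of_lt_of_lt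
      (mem_range.1 hx) (mem_range.1 hy)
  exact sum_nbij _ hmaps hinj (surjOn_of_injOn_of_card_le _ hmaps hinj le_rfl) fun _ _ => rfl

theorem two_mul_sum_range_add_mul_div_of_coprime {q c : ℕ} (hq : 0 < q) (hc : q.Coprime c)
    (a : ℕ) : 2 * ∑ t ∈ range q, (a + c * t) / q + (q - 1) = 2 * a + c * (q - 1) := by
  have hdiv : q * ∑ t ∈ range q, (a + c * t) / q + ∑ t ∈ range q, (a + c * t) % q
      = q * a + c * ∑ t ∈ range q, t := by
    rw [mul_sum, ← sum_add_distrib]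
    simp only [Nat.div_add_mod, sum_add_distrib, sum_const, card_range, smul_eq_mul, mul_sum]
  rw [sum_range_add_mul_mod_of_coprime hc a] at hdiv
  have hgauss := sum_range_id_mul_two q
  apply Nat.eq_of_mul_eq_mul_left hq
  nlinarith

theorem sum_range_ite_le_eq_sub (t n : ℕ) : (∑ j ∈ range n, if t ≤ j then 1 else 0) = n - t := by
  rw [sum_boole, range_eq_Ico, Ico_filter_le, card_Ico]; simp

theorem div_eq_of_lt_three_mul {x q : ℕ} (h : x < 3 * q) :
    x / q = (if q ≤ x then 1 else 0) + (if 2 * q ≤ x then 1 else 0) := by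
  have := Nat.div_add_mod x q
  have := Nat.mod_lt x (show 0 < q by omega)
  have : x / q < 3 := (Nat.div_lt_iff_lt_mul (by omega)).2 (by omega)
  interval_cases x / q <;> split_ifs <;> omega

theorem div_eq_of_lt_four_mul {x q : ℕ} (h : x < 4 * q) :
    x / q = (if q ≤ x then 1 else 0) + (if 2 * q ≤ x then 1 else 0)
      + (if 3 * q ≤ x then 1 else 0) := by
  have := Nat.div_add_mod x q
  have := Nat.mod_lt x (show 0 < q by omega)
  have : x / q < 4 := (Nat.div_lt_iff_lt_mul (by omega)).2 (by omega)
  interval_cases x / q <;> split_ifs <;> omega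

/-- The term of Legendre's formula for the `p`-adic valuation of `∏_{i<n} (4i+2)!` that belongs
to the power `q` of `p`; `denFloorSum` is the same for `∏_{i<n} (n+2i+1)!`. -/
def numFloorSum (q n : ℕ) : ℕ := ∑ i ∈ range n, (4 * i + 2) / q

def denFloorSum (q n : ℕ) : ℕ := ∑ i ∈ range n, (n + 2 * i + 1) / q

section OddModulus

variable {q : ℕ}

theorem two_mul_numFloorSum_add_period (hq : Odd q) (m : ℕ) :
    2 * numFloorSum q (m + q) = 2 * numFloorSum q m + (8 * m + 3 * q + 1) := by
  have hperiod := two_mul_sum_range_add_mul_div_of_coprime hq.pos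
    (Nat.Coprime.pow_right 2 (Nat.coprime_two_right.2 hq)) (4 * m + 2)
  have hshift : ∀ t, (4 * (m + t) + 2) / q = (4 * m + 2 + 2 ^ 2 * t) / q := fun t => by ring_nf
  rw [numFloorSum, numFloorSum, sum_range_add, mul_add, Finset.sum_congr rfl fun t _ => hshift t]
  have := hq.pos
  omega

theorem two_mul_denFloorSum_add_period (hq : Odd q) (m : ℕ) :
    2 * denFloorSum q (m + q) = 2 * denFloorSum q m + (8 * m + 3 * q + 1) := by
  have hperiod := two_mul_sum_range_add_mul_div_of_coprime hq.pos
    (Nat.coprime_two_right.2 hq) (3 * m + 1)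
  have hshift : ∀ i, (m + q + 2 * i + 1) / q = (m + 2 * i + 1) / q + 1 := fun i => by
    rw [show m + q + 2 * i + 1 = m + 2 * i + 1 + q by ring, Nat.add_div_right _ hq.pos]
  have htail : ∀ t, (m + 2 * (m + t) + 1) / q = (3 * m + 1 + 2 * t) / q := fun t => by ring_nf
  rw [denFloorSum, denFloorSum, Finset.sum_congr rfl fun i _ => hshift i, sum_add_distrib,
    sum_range_add, Finset.sum_congr rfl fun t _ => htail t]
  simp only [sum_const, card_range, smul_eq_mul, mul_one]
  have := hq.pos
  omega

theorem denFloorSum_le_numFloorSum_of_lt (hq : Odd q) {n : ℕ} (hn : n < q) :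
    denFloorSum q n ≤ numFloorSum q n := by
  have hnum : numFloorSum q n
      = (n - (q + 1) / 4) + (n - (2 * q + 1) / 4) + (n - (3 * q + 1) / 4) := by
    rw [← sum_range_ite_le_eq_sub ((q + 1) / 4), ← sum_range_ite_le_eq_sub ((2 * q + 1) / 4),
      ← sum_range_ite_le_eq_sub ((3 * q + 1) / 4), ← sum_add_distrib, ← sum_add_distrib,
      numFloorSum]
    refine sum_congr rfl fun i hi => ?_
    have := mem_range.1 hi
    rw [div_eq_of_lt_four_mul (by omega)]
    split_ifs <;> omega
  have hden : denFloorSum q n = (n - (q - n) / 2) + (n - (2 * q - n) / 2) := by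
    rw [← sum_range_ite_le_eq_sub ((q - n) / 2), ← sum_range_ite_le_eq_sub ((2 * q - n) / 2),
      ← sum_add_distrib, denFloorSum]
    refine sum_congr rfl fun i hi => ?_
    have := mem_range.1 hi
    rw [div_eq_of_lt_three_mul (by omega)]
    split_ifs <;> omega
  obtain ⟨e, rfl⟩ := hq
  omega

theorem denFloorSum_le_numFloorSum (hq : Odd q) (n : ℕ) : denFloorSum q n ≤ numFloorSum q n := by
  induction n using Nat.strong_induction_on with
  | _ n ih =>
    rcases lt_or_ge n q with hn | hn
    · exact denFloorSum_le_numFloorSum_of_lt hq hn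
    · obtain ⟨m, rfl⟩ := Nat.exists_eq_add_of_le' hn
      have := ih m (by have := hq.pos; omega)
      have := two_mul_numFloorSum_add_period hq m
      have := two_mul_denFloorSum_add_period hq m
      omega

end OddModulus

theorem sum_padicValNat_factorial_le_of_odd {p : ℕ} [Fact p.Prime] (hp : Odd p) (n : ℕ) :
    ∑ i ∈ range n, padicValNat p (n + 2 * i + 1)! ≤ ∑ i ∈ range n, padicValNat p (4 * i + 2)! := by
  have legendre : ∀ x < 4 * n + 2, padicValNat p x ! = ∑ k ∈ Ico 1 (4 * n + 2), x / p ^ k :=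
    fun x hx => padicValNat_factorial ((Nat.log_le_self p x).trans_lt hx)
  rw [sum_congr rfl fun i hi => legendre _ (by have := mem_range.1 hi; omega),
    sum_congr rfl fun i hi => legendre (4 * i + 2) (by have := mem_range.1 hi; omega),
    sum_comm, sum_comm (s := range n)]
  exact sum_le_sum fun k _ => denFloorSum_le_numFloorSum hp.pow n

theorem three_mul_add_one_le_padicValNat_two_factorial (i : ℕ) :
    3 * i + 1 ≤ padicValNat 2 (4 * i + 2)! := by
  have h₁ : padicValNat 2 (4 * i + 2)! = padicValNat 2 (2 * i + 1)! + (2 * i + 1) := by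
    rw [← padicValNat_factorial_mul]; ring_nf
  have h₂ : padicValNat 2 (2 * i + 1)! = padicValNat 2 i ! + i := by
    rw [padicValNat_factorial_mul_add i one_lt_two, padicValNat_factorial_mul]
  omega

theorem sum_padicValNat_two_factorial_le (n : ℕ) :
    ∑ i ∈ range n, padicValNat 2 (n + 2 * i + 1)!
      ≤ n * (n - 1) / 2 + ∑ i ∈ range n, padicValNat 2 (4 * i + 2)! := by
  have hgauss := sum_range_id_mul_two n
  calc ∑ i ∈ range n, padicValNat 2 (n + 2 * i + 1)!
      ≤ ∑ i ∈ range n, (n + 2 * i) :=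
        sum_le_sum fun i _ => Nat.le_of_lt_succ (padicValNat_factorial_lt_of_ne_zero 2 (by omega))
    _ = n * (n - 1) / 2 + ∑ i ∈ range n, (3 * i + 1) := by
        rw [← sum_range_id, ← sum_add_distrib]
        simp only [sum_add_distrib, sum_const, card_range, smul_eq_mul]
        rw [← mul_sum, ← mul_sum]
        rcases n with _ | n
        · rfl
        · simp only [Nat.add_sub_cancel] at hgauss
          nlinarith
    _ ≤ n * (n - 1) / 2 + ∑ i ∈ range n, padicValNat 2 (4 * i + 2)! := by
        gcongr with i
        exact three_mul_add_one_le_padicValNat_two_factorial i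

theorem factorization_prod_factorial_apply {ι : Type*} (s : Finset ι) (f : ι → ℕ) {p : ℕ}
    (hp : p.Prime) : (∏ i ∈ s, (f i)!).factorization p = ∑ i ∈ s, padicValNat p (f i)! := by
  rw [Nat.factorization_prod fun i _ => factorial_ne_zero _, Finset.sum_apply']
  exact sum_congr rfl fun i _ => Nat.factorization_def _ hp

theorem prod_factorial_dvd (n : ℕ) :
    ∏ i ∈ range n, (n + 2 * i + 1)! ∣ 2 ^ (n * (n - 1) / 2) * ∏ i ∈ range n, (4 * i + 2)! := by
  have hprod : ∀ f : ℕ → ℕ, ∏ i ∈ range n, (f i)! ≠ 0 := fun f =>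
    prod_ne_zero_iff.2 fun i _ => factorial_ne_zero _
  rw [← Nat.factorization_prime_le_iff_dvd (hprod _) (mul_ne_zero (by positivity) (hprod _))]
  intro p hp
  have : Fact p.Prime := ⟨hp⟩
  rw [Nat.factorization_mul (by positivity) (hprod _), Finsupp.add_apply,
    Nat.factorization_pow, Finsupp.smul_apply, factorization_prod_factorial_apply _ _ hp,
    factorization_prod_factorial_apply _ _ hp, smul_eq_mul]
  rcases eq_or_ne p 2 with rfl | hp2
  · simpa [Nat.prime_two.factorization_self] using sum_padicValNat_two_factorial_le n
  · simpa [Nat.prime_two.factorization, Finsupp.single_apply, hp2.symm] using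
      sum_padicValNat_factorial_le_of_odd (hp.odd_of_ne_two hp2) n

theorem stmt18_general (n : ℕ) :
    ∃ m : ℕ, 0 < m ∧
      ((2 : ℚ) ^ (n*(n-1)/2) *
        ∏ i ∈ Finset.range n, (Nat.factorial (4*i+2) : ℚ) / (Nat.factorial (n+2*i+1) : ℚ))
      = m := by
  obtain ⟨m, hm⟩ := prod_factorial_dvd n
  have hpos : 0 < (∏ i ∈ range n, (n + 2 * i + 1)!) * m := hm ▸ by positivity
  refine ⟨m, Nat.pos_of_mul_pos_left hpos, ?_⟩
  rw [prod_div_distrib, ← mul_div_assoc, div_eq_iff (by positivity)]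
  exact_mod_cast hm.trans (mul_comm _ _)

theorem stmt18 (n : ℕ) (hn : 1 ≤ n) :
    ∃ m : ℕ, 0 < m ∧
      ((2 : ℚ) ^ (n*(n-1)/2) *
        ∏ i ∈ Finset.range n, (Nat.factorial (4*i+2) : ℚ) / (Nat.factorial (n+2*i+1) : ℚ))
      = m :=
  stmt18_general n
end
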